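/- If θ follows a von Mises distribution with parameters (ν, τ) where the density is exp(τ·cos(θ-ν))/(2π·I₀(τ)), then as τ → ∞ the random variable √τ·(θ - ν) converges in distribution to a standard normal random variable. -/

import Mathlib

open MeasureTheory ProbabilityTheory Real Filter

/-- Modified Bessel function of the first kind of order 0. -/
noncomputable def besselI0 (τ : ℝ) : ℝ := (1 / π) * ∫ t in (0 : ℝ)..π, Real.exp (τ * Real.cos t)

/-- The law of a von Mises random variable with mean direction `ν` and concentration `τ`,
supported on `[ν - π, ν + π]`. -/
noncomputable def vonMisesLaw (ν τ : ℝ) : Measure ℝ :=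
  volume.withDensity (fun θ =>
    ENNReal.ofReal (Set.indicator (Set.Icc (ν - π) (ν + π))
      (fun θ => Real.exp (τ * Real.cos (θ - ν)) / (2 * π * besselI0 τ)) θ))

open Set
open scoped Topology ENNReal

/-!
In the variable `u = √τ (θ - ν)` the von Mises law has density proportional to
`exp (τ (cos (u / √τ) - 1))` on `|u| ≤ π √τ`. This tends to `exp (-u ^ 2 / 2)` pointwise, and
`cos t ≤ 1 - 2 t ^ 2 / π ^ 2` on `[-π, π]` dominates it by `exp (-2 u ^ 2 / π ^ 2)`, so dominated
convergence applies to the numerator and the denominator of the normalised CDF. The normalising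
constants never need to be computed: both laws are probability measures, so they cancel.
-/

lemma integral_exp_mul_cos_eq_two_pi_mul_besselI0 (τ : ℝ) :
    ∫ t in (-π)..π, exp (τ * cos t) = 2 * π * besselI0 τ := by
  have hint (a b : ℝ) : IntervalIntegrable (fun t => exp (τ * cos t)) volume a b :=
    (by fun_prop : Continuous fun t => exp (τ * cos t)).intervalIntegrable a b
  have hneg : ∫ t in (-π)..0, exp (τ * cos t) = ∫ t in 0..π, exp (τ * cos t) := by
    simpa using (intervalIntegral.integral_comp_neg (a := 0) (b := π)
      fun t => exp (τ * cos t)).symm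
  rw [← intervalIntegral.integral_add_adjacent_intervals (hint _ 0) (hint 0 _), hneg, besselI0]
  field_simp
  ring

lemma besselI0_pos (τ : ℝ) : 0 < besselI0 τ :=
  mul_pos (by positivity) <| intervalIntegral.intervalIntegral_pos_of_pos_on
    ((by fun_prop : Continuous fun t => exp (τ * cos t)).intervalIntegrable _ _)
    (fun _ _ => exp_pos _) pi_pos

instance isProbabilityMeasure_vonMisesLaw (ν τ : ℝ) : IsProbabilityMeasure (vonMisesLaw ν τ) := by
  have hC := mul_pos two_pi_pos (besselI0_pos τ)
  have hint : Integrable ((Icc (ν - π) (ν + π)).indicator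
      fun θ => exp (τ * cos (θ - ν)) / (2 * π * besselI0 τ)) :=
    (Continuous.integrableOn_Icc (by fun_prop)).integrable_indicator measurableSet_Icc
  constructor
  rw [vonMisesLaw, withDensity_apply _ MeasurableSet.univ, Measure.restrict_univ,
    ← ofReal_integral_eq_lintegral_ofReal hint
      (ae_of_all _ (indicator_nonneg fun _ _ => by positivity)),
    integral_indicator measurableSet_Icc, integral_Icc_eq_integral_Ioc,
    ← intervalIntegral.integral_of_le (by linarith [pi_pos]), intervalIntegral.integral_div,
    intervalIntegral.integral_comp_sub_right fun t => exp (τ * cos t)]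
  simp [integral_exp_mul_cos_eq_two_pi_mul_besselI0, hC.ne']

/-- `2 π I₀(τ) e^{-τ}` times the von Mises density centred at `0`; the factor `e^{-τ}` keeps it
bounded as `τ → ∞`. -/
noncomputable def vonMisesWeight (τ t : ℝ) : ℝ :=
  (Icc (-π) π).indicator (fun t => exp (τ * (cos t - 1))) t

lemma vonMisesWeight_nonneg (τ t : ℝ) : 0 ≤ vonMisesWeight τ t :=
  indicator_nonneg (fun _ _ => (exp_pos _).le) t

lemma measurable_vonMisesWeight (τ : ℝ) : Measurable (vonMisesWeight τ) :=
  (by fun_prop : Measurable fun t => exp (τ * (cos t - 1))).indicator measurableSet_Icc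

lemma vonMisesLaw_eq_withDensity (ν τ : ℝ) :
    vonMisesLaw ν τ = volume.withDensity fun θ =>
      ENNReal.ofReal (exp τ / (2 * π * besselI0 τ) * vonMisesWeight τ (θ - ν)) := by
  rw [vonMisesLaw]
  congr with θ
  have hmem : θ ∈ Icc (ν - π) (ν + π) ↔ θ - ν ∈ Icc (-π) π := by
    simp only [mem_Icc]; constructor <;> intro h <;> constructor <;> linarith [h.1, h.2]
  by_cases h : θ ∈ Icc (ν - π) (ν + π)
  · rw [indicator_of_mem h, vonMisesWeight, indicator_of_mem (hmem.1 h), ← mul_div_right_comm,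
      ← exp_add]
    ring_nf
  · rw [indicator_of_notMem h, vonMisesWeight, indicator_of_notMem (hmem.not.1 h), mul_zero]

lemma map_volume_affine {c : ℝ} (hc : c ≠ 0) (ν : ℝ) :
    volume.map (fun θ : ℝ => c * (θ - ν)) = ENNReal.ofReal |c⁻¹| • volume := by
  have : (fun θ : ℝ => c * (θ - ν)) = (c * ·) ∘ (· - ν) := rfl
  rw [this, ← Measure.map_map (by fun_prop) (by fun_prop), map_sub_right_eq_self,
    Real.map_volume_mul_left hc]

lemma map_withDensity_comp_affine {c : ℝ} (hc : c ≠ 0) (ν : ℝ) {g : ℝ → ℝ≥0∞}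
    (hg : Measurable g) :
    (volume.withDensity fun θ => g (c * (θ - ν))).map (fun θ => c * (θ - ν)) =
      ENNReal.ofReal |c⁻¹| • volume.withDensity g := by
  ext s hs
  have hf : Measurable fun θ : ℝ => c * (θ - ν) := by fun_prop
  rw [Measure.map_apply hf hs, withDensity_apply _ (hf hs), Measure.smul_apply,
    withDensity_apply _ hs, ← setLIntegral_map hs hg hf, map_volume_affine hc,
    Measure.restrict_smul, lintegral_smul_measure]

lemma exists_map_vonMisesLaw_eq_smul_withDensity (ν : ℝ) {τ : ℝ} (hτ : 0 < τ) :
    ∃ k : ℝ≥0∞, (vonMisesLaw ν τ).map (fun θ => √τ * (θ - ν)) =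
      k • volume.withDensity fun u => ENNReal.ofReal (vonMisesWeight τ (u / √τ)) := by
  have hs : √τ ≠ 0 := (sqrt_pos.2 hτ).ne'
  set a := exp τ / (2 * π * besselI0 τ)
  have ha : 0 ≤ a := div_nonneg (exp_pos _).le (mul_pos two_pi_pos (besselI0_pos τ)).le
  have hdens : (fun θ => ENNReal.ofReal (a * vonMisesWeight τ (θ - ν))) =
      fun θ => (ENNReal.ofReal a • fun u => ENNReal.ofReal (vonMisesWeight τ (u / √τ)))
        (√τ * (θ - ν)) := by
    ext θ
    rw [Pi.smul_apply, smul_eq_mul, ← ENNReal.ofReal_mul ha, mul_div_cancel_left₀ _ hs]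
  have hg : Measurable fun u => ENNReal.ofReal (vonMisesWeight τ (u / √τ)) :=
    ((measurable_vonMisesWeight τ).comp (by fun_prop)).ennreal_ofReal
  refine ⟨ENNReal.ofReal |(√τ)⁻¹| * ENNReal.ofReal a, ?_⟩
  rw [vonMisesLaw_eq_withDensity, hdens, map_withDensity_comp_affine hs ν (hg.const_smul _),
    withDensity_smul' _ _ ENNReal.ofReal_ne_top, smul_smul]

lemma toReal_apply_eq_integral_div {α : Type*} [MeasurableSpace α] {μ M : Measure α}
    [IsProbabilityMeasure M] {g : α → ℝ} (hg : 0 ≤ g) (hgm : AEStronglyMeasurable g μ)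
    {k : ℝ≥0∞} (h : M = k • μ.withDensity fun x => ENNReal.ofReal (g x))
    {s : Set α} (hs : MeasurableSet s) :
    (M s).toReal = (∫ x in s, g x ∂μ) / ∫ x, g x ∂μ := by
  set W := μ.withDensity fun x => ENNReal.ofReal (g x)
  have hW {t : Set α} (ht : MeasurableSet t) : (W t).toReal = ∫ x in t, g x ∂μ := by
    rw [withDensity_apply _ ht, integral_eq_lintegral_of_nonneg_ae (ae_of_all _ hg) hgm.restrict]
  have hk : k = (W univ)⁻¹ := by
    refine ENNReal.eq_inv_of_mul_eq_one_left ?_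
    rw [← measure_univ (μ := M), h, Measure.smul_apply, smul_eq_mul]
  rw [h, Measure.smul_apply, smul_eq_mul, hk, ← ENNReal.div_eq_inv_mul, ENNReal.toReal_div,
    hW hs, hW MeasurableSet.univ, setIntegral_univ]

lemma gaussianReal_zero_one_eq_smul_withDensity :
    gaussianReal 0 1 =
      ENNReal.ofReal (√(2 * π))⁻¹ •
        volume.withDensity fun u => ENNReal.ofReal (exp (-u ^ 2 / 2)) := by
  rw [gaussianReal_of_var_ne_zero _ one_ne_zero, ← withDensity_smul' _ _ ENNReal.ofReal_ne_top]
  congr with u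
  rw [gaussianPDF, gaussianPDFReal, Pi.smul_apply, smul_eq_mul,
    ← ENNReal.ofReal_mul (by positivity)]
  simp

lemma tendsto_mul_cos_div_sqrt_sub_one (u : ℝ) :
    Tendsto (fun τ => τ * (cos (u / √τ) - 1)) atTop (𝓝 (-u ^ 2 / 2)) := by
  rw [tendsto_iff_norm_sub_tendsto_zero]
  refine squeeze_zero' (Eventually.of_forall fun _ => norm_nonneg _) ?_
    ((tendsto_inv_atTop_zero.const_mul (u ^ 4 * (5 / 96))).trans (by rw [mul_zero]))
  filter_upwards [eventually_gt_atTop 0, eventually_ge_atTop (u ^ 2)] with τ hτ hu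
  have hsq : √τ ^ 2 = τ := sq_sqrt hτ.le
  have hsmall : |u / √τ| ≤ 1 := by
    rw [← sq_le_one_iff_abs_le_one, div_pow, hsq, div_le_one hτ]
    exact hu
  have hid : τ * (cos (u / √τ) - 1) - -u ^ 2 / 2 = τ * (cos (u / √τ) - (1 - (u / √τ) ^ 2 / 2)) := by
    rw [div_pow, hsq]; field_simp; ring
  calc ‖τ * (cos (u / √τ) - 1) - -u ^ 2 / 2‖
      = τ * |cos (u / √τ) - (1 - (u / √τ) ^ 2 / 2)| := by
        rw [hid, Real.norm_eq_abs, abs_mul, abs_of_pos hτ]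
    _ ≤ τ * (|u / √τ| ^ 4 * (5 / 96)) := by gcongr; exact cos_bound hsmall
    _ = u ^ 4 * (5 / 96) * τ⁻¹ := by
        have hsq4 : √τ ^ 4 = τ ^ 2 := by rw [show 4 = 2 * 2 from rfl, pow_mul, hsq]
        rw [pow_abs, abs_of_nonneg (by positivity), div_pow, hsq4]
        field_simp

lemma vonMisesWeight_div_sqrt_le {τ : ℝ} (hτ : 0 < τ) (u : ℝ) :
    vonMisesWeight τ (u / √τ) ≤ exp (-(2 / π ^ 2) * u ^ 2) := by
  by_cases h : u / √τ ∈ Icc (-π) π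
  · rw [vonMisesWeight, indicator_of_mem h, exp_le_exp]
    have hcos := cos_le_one_sub_mul_cos_sq (abs_le.2 h)
    calc τ * (cos (u / √τ) - 1) ≤ τ * (-(2 / π ^ 2) * (u / √τ) ^ 2) := by gcongr; linarith
      _ = -(2 / π ^ 2) * u ^ 2 := by rw [div_pow, sq_sqrt hτ.le]; field_simp
  · rw [vonMisesWeight, indicator_of_notMem h]
    exact (exp_pos _).le

lemma tendsto_vonMisesWeight_div_sqrt (u : ℝ) :
    Tendsto (fun τ => vonMisesWeight τ (u / √τ)) atTop (𝓝 (exp (-u ^ 2 / 2))) := by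
  have hsmall : Tendsto (fun τ => u / √τ) atTop (𝓝 0) :=
    tendsto_const_nhds.div_atTop tendsto_sqrt_atTop
  have hmem : ∀ᶠ τ in atTop, u / √τ ∈ Icc (-π) π :=
    hsmall.eventually (Icc_mem_nhds (by linarith [pi_pos]) pi_pos)
  refine ((continuous_exp.tendsto _).comp (tendsto_mul_cos_div_sqrt_sub_one u)).congr' ?_
  filter_upwards [hmem] with τ h
  rw [vonMisesWeight, indicator_of_mem h, Function.comp_apply]

lemma tendsto_setIntegral_vonMisesWeight_div_sqrt (s : Set ℝ) :
    Tendsto (fun τ => ∫ u in s, vonMisesWeight τ (u / √τ)) atTop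
      (𝓝 (∫ u in s, exp (-u ^ 2 / 2))) := by
  refine tendsto_integral_filter_of_dominated_convergence (fun u => exp (-(2 / π ^ 2) * u ^ 2))
    (Eventually.of_forall fun τ => ?_) ?_
    (integrable_exp_neg_mul_sq (by positivity)).integrableOn
    (ae_of_all _ tendsto_vonMisesWeight_div_sqrt)
  · exact ((measurable_vonMisesWeight τ).comp (by fun_prop)).aestronglyMeasurable
  · filter_upwards [eventually_gt_atTop 0] with τ hτ
    refine ae_of_all _ fun u => ?_
    rw [Real.norm_of_nonneg (vonMisesWeight_nonneg _ _)]
    exact vonMisesWeight_div_sqrt_le hτ u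

theorem vonMises_clt (ν : ℝ) :
    ∀ x : ℝ,
      Tendsto
        (fun τ : ℝ =>
          ((vonMisesLaw ν τ).map (fun θ => Real.sqrt τ * (θ - ν)) (Set.Iic x)).toReal)
        atTop (nhds ((gaussianReal 0 1 (Set.Iic x)).toReal)) := by
  intro x
  have hgauss : Integrable fun u : ℝ => exp (-u ^ 2 / 2) := by
    simpa [neg_div, div_eq_inv_mul] using integrable_exp_neg_mul_sq (b := 1 / 2) (by norm_num)
  rw [toReal_apply_eq_integral_div (fun u => (exp_pos _).le) hgauss.aestronglyMeasurable
    gaussianReal_zero_one_eq_smul_withDensity measurableSet_Iic]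
  have hden := tendsto_setIntegral_vonMisesWeight_div_sqrt univ
  simp only [Measure.restrict_univ] at hden
  refine ((tendsto_setIntegral_vonMisesWeight_div_sqrt _).div hden
    (integral_exp_pos hgauss).ne').congr' ?_
  filter_upwards [eventually_gt_atTop 0] with τ hτ
  obtain ⟨k, hk⟩ := exists_map_vonMisesLaw_eq_smul_withDensity ν hτ
  have : IsProbabilityMeasure ((vonMisesLaw ν τ).map fun θ => √τ * (θ - ν)) :=
    Measure.isProbabilityMeasure_map (by fun_prop)
  exact (toReal_apply_eq_integral_div (fun u => vonMisesWeight_nonneg _ _)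
    ((measurable_vonMisesWeight τ).comp (by fun_prop)).aestronglyMeasurable hk
    measurableSet_Iic).symm
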